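/- arXiv:1503.05261 — 3 statements merged into one kernel-verified Lean document; each statement's English description precedes it below -/
import Mathlib

section
/- Let n ≥ 1 and let μ be the Haar probability measure on SO(n), viewed as a measure on the space of n×n real matrices supported on SO(n). Then for every smooth function φ : Matrix (Fin n) (Fin n) ℝ → ℝ and every pair of indices 1 ≤ i < j ≤ n, one has ∫_{SO(n)} Σ_{k=1}^n ( y_{ki}·(∂φ/∂y_{kj})(y) − y_{kj}·(∂φ/∂y_{ki})(y) ) dμ(y) = 0, and likewise ∫_{SO(n)} Σ_{k=1}^n ( y_{ik}·(∂φ/∂y_{jk})(y) − y_{jk}·(∂φ/∂y_{ik})(y) ) dμ(y) = 0, where ∂φ/∂y_{ab} denotes the partial derivative of φ in the (a,b) matrix-entry coordinate. -/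
open MeasureTheory Matrix
open scoped ENNReal

attribute [local instance] Matrix.normedAddCommGroup Matrix.normedSpace

noncomputable instance matrixMeasurableSpace (n : ℕ) :
    MeasurableSpace (Matrix (Fin n) (Fin n) ℝ) := borel _

instance (n : ℕ) : BorelSpace (Matrix (Fin n) (Fin n) ℝ) := ⟨rfl⟩

instance (n : ℕ) : SecondCountableTopology (Matrix (Fin n) (Fin n) ℝ) :=
  inferInstanceAs (SecondCountableTopology (Fin n → Fin n → ℝ))

/-- The special orthogonal group `SO(n)`, viewed as a subset of the space of
`n × n` real matrices. -/
def SO (n : ℕ) : Set (Matrix (Fin n) (Fin n) ℝ) :=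
  {y | yᵀ * y = 1 ∧ y.det = 1}

/-- `μ` is the Haar probability measure of `SO(n)`, viewed as a measure on the space of
`n × n` real matrices: it is a probability measure carried by `SO(n)` which is invariant
under left translation by elements of `SO(n)`. -/
structure IsHaarSO (n : ℕ) (μ : Measure (Matrix (Fin n) (Fin n) ℝ)) : Prop where
  isProbabilityMeasure : IsProbabilityMeasure μ
  ae_mem : ∀ᵐ y ∂μ, y ∈ SO n
  left_invariant : ∀ a ∈ SO n, Measure.map (fun y => a * y) μ = μ

namespace SOlemmas


variable {n : ℕ}

lemma mul_transpose_self {y : Matrix (Fin n) (Fin n) ℝ} (hy : y ∈ SO n) : y * yᵀ = 1 :=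
  mul_eq_one_comm.mp hy.1

lemma transpose_mem {y : Matrix (Fin n) (Fin n) ℝ} (hy : y ∈ SO n) : yᵀ ∈ SO n := by
  refine ⟨?_, ?_⟩
  · simpa using mul_transpose_self hy
  · rw [Matrix.det_transpose]; exact hy.2

lemma mul_mem {a b : Matrix (Fin n) (Fin n) ℝ} (ha : a ∈ SO n) (hb : b ∈ SO n) :
    a * b ∈ SO n := by
  refine ⟨?_, ?_⟩
  · rw [Matrix.transpose_mul]
    calc bᵀ * aᵀ * (a * b) = bᵀ * (aᵀ * a) * b := by noncomm_ring
      _ = 1 := by rw [ha.1, mul_one, hb.1]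
  · rw [Matrix.det_mul, ha.2, hb.2, one_mul]

lemma one_mem : (1 : Matrix (Fin n) (Fin n) ℝ) ∈ SO n := by
  constructor <;> simp

lemma entry_abs_le {y : Matrix (Fin n) (Fin n) ℝ} (hy : y ∈ SO n) (a b : Fin n) :
    |y a b| ≤ 1 := by
  have h : ∑ k, y k b * y k b = 1 := by
    have := congrFun (congrFun hy.1 b) b
    simpa [Matrix.mul_apply, Matrix.transpose_apply] using this
  have h1 : y a b * y a b ≤ 1 := by
    rw [← h]
    exact Finset.single_le_sum (f := fun k => y k b * y k b)
      (fun k _ => mul_self_nonneg _) (Finset.mem_univ a)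
  nlinarith [abs_nonneg (y a b), sq_abs (y a b)]

lemma norm_le {y : Matrix (Fin n) (Fin n) ℝ} (hy : y ∈ SO n) : ‖y‖ ≤ 1 := by
  rw [Matrix.norm_le_iff (by norm_num)]
  intro a b
  simpa using entry_abs_le hy a b



variable {n : ℕ}

lemma isClosed_SO : IsClosed (SO n) := by
  have h1 : IsClosed {y : Matrix (Fin n) (Fin n) ℝ | yᵀ * y = 1} :=
    isClosed_eq (Continuous.matrix_mul (Continuous.matrix_transpose continuous_id)
      continuous_id) continuous_const
  have h2 : IsClosed {y : Matrix (Fin n) (Fin n) ℝ | y.det = 1} :=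
    isClosed_eq (Continuous.matrix_det continuous_id) continuous_const
  exact h1.inter h2

lemma measurableSet_SO : MeasurableSet (SO n) := isClosed_SO.measurableSet

variable {μ : Measure (Matrix (Fin n) (Fin n) ℝ)}

lemma lintegral_left_inv (hμ : IsHaarSO n μ) {a : Matrix (Fin n) (Fin n) ℝ} (ha : a ∈ SO n)
    {f : Matrix (Fin n) (Fin n) ℝ → ℝ≥0∞} (hf : Measurable f) :
    ∫⁻ y, f (a * y) ∂μ = ∫⁻ y, f y ∂μ := by
  conv_rhs => rw [← hμ.left_invariant a ha]
  rw [lintegral_map hf (show Measurable fun y : Matrix (Fin n) (Fin n) ℝ => a * y from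
    (Continuous.matrix_mul continuous_const continuous_id).measurable)]

noncomputable def nu (μ : Measure (Matrix (Fin n) (Fin n) ℝ)) :
    Measure (Matrix (Fin n) (Fin n) ℝ) :=
  μ.map (fun y => yᵀ)

lemma measurable_transpose :
    Measurable (fun y : Matrix (Fin n) (Fin n) ℝ => yᵀ) :=
  (Continuous.matrix_transpose continuous_id).measurable

lemma nu_prob (hμ : IsHaarSO n μ) : IsProbabilityMeasure (nu μ) := by
  have : IsProbabilityMeasure μ := hμ.isProbabilityMeasure
  exact Measure.isProbabilityMeasure_map measurable_transpose.aemeasurable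

lemma nu_ae_mem (hμ : IsHaarSO n μ) : ∀ᵐ y ∂(nu μ), y ∈ SO n := by
  rw [nu]
  refine (ae_map_iff measurable_transpose.aemeasurable measurableSet_SO).mpr ?_
  filter_upwards [hμ.ae_mem] with y hy using transpose_mem hy

lemma nu_right_inv (hμ : IsHaarSO n μ) {b : Matrix (Fin n) (Fin n) ℝ} (hb : b ∈ SO n) :
    (nu μ).map (fun y => y * b) = nu μ := by
  have hmb : Measurable (fun y : Matrix (Fin n) (Fin n) ℝ => y * b) :=
    (Continuous.matrix_mul continuous_id continuous_const).measurable
  have hmb' : Measurable (fun y : Matrix (Fin n) (Fin n) ℝ => bᵀ * y) :=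
    (Continuous.matrix_mul continuous_const continuous_id).measurable
  rw [nu, Measure.map_map hmb measurable_transpose]
  have : ((fun y : Matrix (Fin n) (Fin n) ℝ => y * b) ∘ fun y => yᵀ)
      = (fun y => yᵀ) ∘ (fun y => bᵀ * y) := by
    funext y; simp [Function.comp, Matrix.transpose_mul]
  rw [this, ← Measure.map_map measurable_transpose hmb',
    hμ.left_invariant bᵀ (transpose_mem hb)]

lemma lintegral_nu_right_inv (hμ : IsHaarSO n μ) {b : Matrix (Fin n) (Fin n) ℝ} (hb : b ∈ SO n)
    {f : Matrix (Fin n) (Fin n) ℝ → ℝ≥0∞} (hf : Measurable f) :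
    ∫⁻ y, f (y * b) ∂(nu μ) = ∫⁻ y, f y ∂(nu μ) := by
  conv_rhs => rw [← nu_right_inv hμ hb]
  rw [lintegral_map hf (show Measurable fun y : Matrix (Fin n) (Fin n) ℝ => y * b from
    (Continuous.matrix_mul continuous_id continuous_const).measurable)]

lemma lintegral_mu_eq_nu (hμ : IsHaarSO n μ) {f : Matrix (Fin n) (Fin n) ℝ → ℝ≥0∞} (hf : Measurable f) :
    ∫⁻ y, f y ∂μ = ∫⁻ y, f y ∂(nu μ) := by
  have hprob : IsProbabilityMeasure μ := hμ.isProbabilityMeasure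
  have hprobν : IsProbabilityMeasure (nu μ) := nu_prob hμ
  have hmeas : Measurable (fun p : Matrix (Fin n) (Fin n) ℝ × Matrix (Fin n) (Fin n) ℝ
      => f (p.2 * p.1)) :=
    hf.comp (Continuous.matrix_mul continuous_snd continuous_fst).measurable
  have key : ∫⁻ x, ∫⁻ y, f (y * x) ∂(nu μ) ∂μ = ∫⁻ y, ∫⁻ x, f (y * x) ∂μ ∂(nu μ) :=
    lintegral_lintegral_swap hmeas.aemeasurable
  have h1 : ∫⁻ x, ∫⁻ y, f (y * x) ∂(nu μ) ∂μ = ∫⁻ y, f y ∂(nu μ) := by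
    rw [lintegral_congr_ae (g := fun _ => ∫⁻ y, f y ∂(nu μ)) ?_]
    · simp
    · filter_upwards [hμ.ae_mem] with x hx using lintegral_nu_right_inv hμ hx hf
  have h2 : ∫⁻ y, ∫⁻ x, f (y * x) ∂μ ∂(nu μ) = ∫⁻ y, f y ∂μ := by
    rw [lintegral_congr_ae (g := fun _ => ∫⁻ y, f y ∂μ) ?_]
    · simp
    · filter_upwards [nu_ae_mem hμ] with y hy using lintegral_left_inv hμ hy hf
  rw [← h2, ← key, h1]

lemma mu_eq_nu (hμ : IsHaarSO n μ) : μ = nu μ := by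
  ext s hs
  have := lintegral_mu_eq_nu hμ (f := s.indicator 1) (measurable_one.indicator hs)
  simpa [lintegral_indicator_one hs] using this

lemma right_invariant (hμ : IsHaarSO n μ) {b : Matrix (Fin n) (Fin n) ℝ} (hb : b ∈ SO n) :
    μ.map (fun y => y * b) = μ := by
  conv_lhs => rw [mu_eq_nu hμ]
  rw [nu_right_inv hμ hb, ← mu_eq_nu hμ]



variable {n : ℕ} (i j : Fin n)

/-- `P = E_ii + E_jj`. -/
def Pm (i j : Fin n) : Matrix (Fin n) (Fin n) ℝ :=
  Matrix.single i i 1 + Matrix.single j j 1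

/-- `A = E_ij - E_ji`. -/
def Am (i j : Fin n) : Matrix (Fin n) (Fin n) ℝ :=
  Matrix.single i j 1 - Matrix.single j i 1



lemma transpose_stdBasisMatrix (a b : Fin n) (c : ℝ) :
    (Matrix.single a b c)ᵀ = Matrix.single b a c := by
  ext x y
  simp [Matrix.single, Matrix.transpose_apply, and_comm]

lemma Pm_transpose : (Pm i j)ᵀ = Pm i j := by
  simp [Pm, Matrix.transpose_add, transpose_stdBasisMatrix]

lemma Am_transpose : (Am i j)ᵀ = -(Am i j) := by
  simp [Am, Matrix.transpose_sub, transpose_stdBasisMatrix]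

lemma Pm_mul_Pm (hij : i ≠ j) : Pm i j * Pm i j = Pm i j := by
  simp [Pm, add_mul, mul_add, Matrix.single_mul_single_same,
    Matrix.single_mul_single_of_ne, hij, hij.symm]

lemma Pm_mul_Am (hij : i ≠ j) : Pm i j * Am i j = Am i j := by
  simp [Pm, Am, add_mul, mul_sub, Matrix.single_mul_single_same,
    Matrix.single_mul_single_of_ne, hij, hij.symm]

lemma Am_mul_Pm (hij : i ≠ j) : Am i j * Pm i j = Am i j := by
  simp [Pm, Am, sub_mul, mul_add, Matrix.single_mul_single_same,
    Matrix.single_mul_single_of_ne, hij, hij.symm]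
  abel

lemma Am_mul_Am (hij : i ≠ j) : Am i j * Am i j = -(Pm i j) := by
  simp [Pm, Am, sub_mul, mul_sub, Matrix.single_mul_single_same,
    Matrix.single_mul_single_of_ne, hij, hij.symm]
  abel

/-- rotation by angle `t` in the `i j` plane -/
noncomputable def rot (i j : Fin n) (t : ℝ) : Matrix (Fin n) (Fin n) ℝ :=
  1 + (Real.cos t - 1) • Pm i j + Real.sin t • Am i j

lemma rot_zero : rot i j 0 = 1 := by simp [rot]

lemma rot_transpose_mul_rot (hij : i ≠ j) (t : ℝ) : (rot i j t)ᵀ * rot i j t = 1 := by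
  have hc := Real.sin_sq_add_cos_sq t
  simp only [rot, Matrix.transpose_add, Matrix.transpose_smul, Pm_transpose, Am_transpose,
    Matrix.transpose_one, smul_neg]
  set c := Real.cos t
  set s := Real.sin t
  set P := Pm i j
  set A := Am i j
  have h1 : P * P = P := Pm_mul_Pm i j hij
  have h2 : P * A = A := Pm_mul_Am i j hij
  have h3 : A * P = A := Am_mul_Pm i j hij
  have h4 : A * A = -P := Am_mul_Am i j hij
  simp only [add_mul, mul_add, Matrix.smul_mul, Matrix.mul_smul, one_mul, mul_one,
    h1, h2, h3, h4, smul_smul, neg_mul, smul_neg, neg_smul]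
  match_scalars <;> linarith [hc]



lemma continuous_rot : Continuous (rot i j) := by
  unfold rot
  exact (continuous_const.add (((Real.continuous_cos.sub continuous_const).smul
    continuous_const))).add (Real.continuous_sin.smul continuous_const)

lemma rot_det (hij : i ≠ j) (t : ℝ) : (rot i j t).det = 1 := by
  have hd : Continuous fun s => (rot i j s).det :=
    (continuous_rot i j).matrix_det
  have hsq : ∀ s, (rot i j s).det ^ 2 = 1 := by
    intro s
    have := congrArg Matrix.det (rot_transpose_mul_rot i j hij s)
    rwa [Matrix.det_mul, Matrix.det_transpose, ← sq, Matrix.det_one] at this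
  by_contra h
  have hneg : (rot i j t).det = -1 := by
    have := hsq t
    have : ((rot i j t).det - 1) * ((rot i j t).det + 1) = 0 := by ring_nf; linarith [hsq t]
    rcases mul_eq_zero.mp this with h1 | h2
    · exact absurd (by linarith) h
    · linarith
  have h0 : (rot i j 0).det = 1 := by rw [rot_zero]; exact Matrix.det_one
  have : (0 : ℝ) ∈ Set.uIcc ((rot i j 0).det) ((rot i j t).det) := by
    rw [h0, hneg]
    exact ⟨by norm_num [min_le_iff], by norm_num [le_max_iff]⟩
  obtain ⟨c, -, hc⟩ := intermediate_value_uIcc (hd.continuousOn) this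
  have h2 := hsq c
  simp only at hc
  rw [hc] at h2
  norm_num at h2

lemma rot_mem (hij : i ≠ j) (t : ℝ) : rot i j t ∈ SO n :=
  ⟨rot_transpose_mul_rot i j hij t, rot_det i j hij t⟩

lemma hasDerivAt_rot (t : ℝ) :
    HasDerivAt (rot i j) ((-Real.sin t) • Pm i j + Real.cos t • Am i j) t := by
  unfold rot
  have h1 : HasDerivAt (fun s => Real.cos s - 1) (-Real.sin t) t :=
    (Real.hasDerivAt_cos t).sub_const 1
  have h2 : HasDerivAt Real.sin (Real.cos t) t := Real.hasDerivAt_sin t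
  have h3 := ((hasDerivAt_const t (1 : Matrix (Fin n) (Fin n) ℝ)).add
    (h1.smul_const (Pm i j))).add (h2.smul_const (Am i j))
  simp only [neg_smul, zero_add] at h3 ⊢
  exact h3

section Core

variable {n : ℕ} {μ : Measure (Matrix (Fin n) (Fin n) ℝ)}

lemma integrable_of_cont (hμ : IsHaarSO n μ) {f : Matrix (Fin n) (Fin n) ℝ → ℝ}
    (hf : Continuous f) : Integrable f μ := by
  haveI : IsProbabilityMeasure μ := hμ.isProbabilityMeasure
  obtain ⟨C, hC⟩ := (isCompact_closedBall (0 : Matrix (Fin n) (Fin n) ℝ) 1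
    ).exists_bound_of_continuousOn hf.continuousOn
  refine Integrable.mono' (integrable_const C) hf.aestronglyMeasurable ?_
  filter_upwards [hμ.ae_mem] with y hy
  exact hC y (by simpa [Metric.mem_closedBall, dist_zero_right] using norm_le hy)

lemma core_right (hμ : IsHaarSO n μ) (φ : Matrix (Fin n) (Fin n) ℝ → ℝ)
    (hφ : ContDiff ℝ (⊤ : ℕ∞) φ) (i j : Fin n) (hij : i ≠ j) :
    ∫ y, fderiv ℝ φ y (y * Am i j) ∂μ = 0 := by
  haveI : IsProbabilityMeasure μ := hμ.isProbabilityMeasure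
  have hφd : Differentiable ℝ φ := hφ.differentiable (by simp)
  have hφc : Continuous φ := hφ.continuous
  have hDcont : Continuous (fderiv ℝ φ) := hφ.continuous_fderiv (by simp)
  -- the derivative of rot
  set R' : ℝ → Matrix (Fin n) (Fin n) ℝ :=
    fun t => (-Real.sin t) • Pm i j + Real.cos t • Am i j with hR'
  have hR'cont : Continuous R' :=
    ((Real.continuous_sin.neg).smul continuous_const).add
      (Real.continuous_cos.smul continuous_const)
  set F : ℝ → Matrix (Fin n) (Fin n) ℝ → ℝ := fun t y => φ (y * rot i j t) with hF
  set F' : ℝ → Matrix (Fin n) (Fin n) ℝ → ℝ :=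
    fun t y => fderiv ℝ φ (y * rot i j t) (y * R' t) with hF'def
  -- differentiability in t
  have h_diff : ∀ (y : Matrix (Fin n) (Fin n) ℝ) (t : ℝ),
      HasDerivAt (fun s => F s y) (F' t y) t := by
    intro y t
    have hL : HasDerivAt (fun s => y * rot i j s) (y * R' t) t := by
      have hclm := (LinearMap.toContinuousLinearMap (LinearMap.mulLeft ℝ y)).hasFDerivAt
        (x := rot i j t)
      have := hclm.comp_hasDerivAt t (hasDerivAt_rot i j t)
      exact this
    exact (hφd.differentiableAt.hasFDerivAt).comp_hasDerivAt t hL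
  -- joint continuity of F'
  have hF'cont : Continuous fun p : ℝ × Matrix (Fin n) (Fin n) ℝ => F' p.1 p.2 := by
    have h1 : Continuous fun p : ℝ × Matrix (Fin n) (Fin n) ℝ => p.2 * rot i j p.1 :=
      Continuous.matrix_mul continuous_snd ((continuous_rot i j).comp continuous_fst)
    have h2 : Continuous fun p : ℝ × Matrix (Fin n) (Fin n) ℝ => p.2 * R' p.1 :=
      Continuous.matrix_mul continuous_snd (hR'cont.comp continuous_fst)
    exact (hDcont.comp h1).clm_apply h2
  -- a bound on the compact set
  obtain ⟨C, hC⟩ := ((isCompact_Icc (a := (-1:ℝ)) (b := 1)).prod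
    (isCompact_closedBall (0 : Matrix (Fin n) (Fin n) ℝ) 1)).exists_bound_of_continuousOn
    hF'cont.continuousOn
  have key := hasDerivAt_integral_of_dominated_loc_of_deriv_le (μ := μ) (x₀ := (0:ℝ))
    (s := Metric.ball (0:ℝ) 1) (F := F) (F' := F') (bound := fun _ => C) (Metric.ball_mem_nhds _ one_pos)
    (Filter.Eventually.of_forall fun t =>
      (hφc.comp ((Continuous.matrix_mul continuous_id continuous_const))).aestronglyMeasurable)
    (integrable_of_cont hμ (hφc.comp (Continuous.matrix_mul continuous_id continuous_const)))
    ((hF'cont.comp (Continuous.prodMk_right (0:ℝ))).aestronglyMeasurable)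
    ?_ (integrable_const C)
    (Filter.Eventually.of_forall fun y t _ => h_diff y t)
  · -- conclude
    obtain ⟨-, hD⟩ := key
    have hconst : (fun t => ∫ y, F t y ∂μ) = fun _ => ∫ y, φ y ∂μ := by
      funext t
      conv_rhs => rw [← right_invariant hμ (rot_mem i j hij t)]
      rw [integral_map (show Measurable fun y : Matrix (Fin n) (Fin n) ℝ => y * rot i j t from
        (Continuous.matrix_mul continuous_id continuous_const).measurable).aemeasurable
        hφc.aestronglyMeasurable]
    have h0 : HasDerivAt (fun t => ∫ y, F t y ∂μ) 0 0 := by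
      rw [hconst]; exact hasDerivAt_const _ _
    have hzero : ∫ y, F' 0 y ∂μ = 0 := hD.unique h0
    rw [← hzero]
    apply integral_congr_ae
    filter_upwards with y
    simp [hF'def, rot_zero, hR']
  · -- the bound
    filter_upwards [hμ.ae_mem] with y hy t ht
    have h1 : (t, y) ∈ Set.Icc (-1:ℝ) 1 ×ˢ Metric.closedBall (0 : Matrix (Fin n) (Fin n) ℝ) 1 := by
      constructor
      · have := Metric.mem_ball.mp ht
        simp only [Real.dist_eq, sub_zero] at this
        exact ⟨by linarith [abs_lt.mp this |>.1], by linarith [abs_lt.mp this |>.2]⟩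
      · simpa [Metric.mem_closedBall, dist_zero_right] using norm_le hy
    have := hC (t, y) h1
    simpa using this

end Core


lemma core_left {μ : Measure (Matrix (Fin n) (Fin n) ℝ)} (hμ : IsHaarSO n μ) (φ : Matrix (Fin n) (Fin n) ℝ → ℝ)
    (hφ : ContDiff ℝ (⊤ : ℕ∞) φ) (i j : Fin n) (hij : i ≠ j) :
    ∫ y, fderiv ℝ φ y (Am i j * y) ∂μ = 0 := by
  haveI : IsProbabilityMeasure μ := hμ.isProbabilityMeasure
  have hφd : Differentiable ℝ φ := hφ.differentiable (by simp)
  have hφc : Continuous φ := hφ.continuous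
  have hDcont : Continuous (fderiv ℝ φ) := hφ.continuous_fderiv (by simp)
  set R' : ℝ → Matrix (Fin n) (Fin n) ℝ :=
    fun t => (-Real.sin t) • Pm i j + Real.cos t • Am i j with hR'
  have hR'cont : Continuous R' :=
    ((Real.continuous_sin.neg).smul continuous_const).add
      (Real.continuous_cos.smul continuous_const)
  set F : ℝ → Matrix (Fin n) (Fin n) ℝ → ℝ := fun t y => φ (rot i j t * y) with hF
  set F' : ℝ → Matrix (Fin n) (Fin n) ℝ → ℝ :=
    fun t y => fderiv ℝ φ (rot i j t * y) (R' t * y) with hF'def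
  have h_diff : ∀ (y : Matrix (Fin n) (Fin n) ℝ) (t : ℝ),
      HasDerivAt (fun s => F s y) (F' t y) t := by
    intro y t
    have hL : HasDerivAt (fun s => rot i j s * y) (R' t * y) t := by
      have hclm := (LinearMap.toContinuousLinearMap (LinearMap.mulRight ℝ y)).hasFDerivAt
        (x := rot i j t)
      have := hclm.comp_hasDerivAt t (hasDerivAt_rot i j t)
      exact this
    exact (hφd.differentiableAt.hasFDerivAt).comp_hasDerivAt t hL
  have hF'cont : Continuous fun p : ℝ × Matrix (Fin n) (Fin n) ℝ => F' p.1 p.2 := by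
    have h1 : Continuous fun p : ℝ × Matrix (Fin n) (Fin n) ℝ => rot i j p.1 * p.2 :=
      Continuous.matrix_mul ((continuous_rot i j).comp continuous_fst) continuous_snd
    have h2 : Continuous fun p : ℝ × Matrix (Fin n) (Fin n) ℝ => R' p.1 * p.2 :=
      Continuous.matrix_mul (hR'cont.comp continuous_fst) continuous_snd
    exact (hDcont.comp h1).clm_apply h2
  obtain ⟨C, hC⟩ := ((isCompact_Icc (a := (-1:ℝ)) (b := 1)).prod
    (isCompact_closedBall (0 : Matrix (Fin n) (Fin n) ℝ) 1)).exists_bound_of_continuousOn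
    hF'cont.continuousOn
  have key := hasDerivAt_integral_of_dominated_loc_of_deriv_le (μ := μ) (x₀ := (0:ℝ))
    (s := Metric.ball (0:ℝ) 1) (F := F) (F' := F') (bound := fun _ => C) (Metric.ball_mem_nhds _ one_pos)
    (Filter.Eventually.of_forall fun t =>
      (hφc.comp ((Continuous.matrix_mul continuous_const continuous_id))).aestronglyMeasurable)
    (integrable_of_cont hμ (hφc.comp (Continuous.matrix_mul continuous_const continuous_id)))
    ((hF'cont.comp (Continuous.prodMk_right (0:ℝ))).aestronglyMeasurable)
    ?_ (integrable_const C)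
    (Filter.Eventually.of_forall fun y t _ => h_diff y t)
  · obtain ⟨-, hD⟩ := key
    have hconst : (fun t => ∫ y, F t y ∂μ) = fun _ => ∫ y, φ y ∂μ := by
      funext t
      conv_rhs => rw [← hμ.left_invariant (rot i j t) (rot_mem i j hij t)]
      rw [integral_map (show Measurable fun y : Matrix (Fin n) (Fin n) ℝ => rot i j t * y from
        (Continuous.matrix_mul continuous_const continuous_id).measurable).aemeasurable
        hφc.aestronglyMeasurable]
    have h0 : HasDerivAt (fun t => ∫ y, F t y ∂μ) 0 0 := by
      rw [hconst]; exact hasDerivAt_const _ _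
    have hzero : ∫ y, F' 0 y ∂μ = 0 := hD.unique h0
    rw [← hzero]
    apply integral_congr_ae
    filter_upwards with y
    simp [hF'def, rot_zero, hR']
  · filter_upwards [hμ.ae_mem] with y hy t ht
    have h1 : (t, y) ∈ Set.Icc (-1:ℝ) 1 ×ˢ Metric.closedBall (0 : Matrix (Fin n) (Fin n) ℝ) 1 := by
      constructor
      · have := Metric.mem_ball.mp ht
        simp only [Real.dist_eq, sub_zero] at this
        exact ⟨by linarith [abs_lt.mp this |>.1], by linarith [abs_lt.mp this |>.2]⟩
      · simpa [Metric.mem_closedBall, dist_zero_right] using norm_le hy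
    have := hC (t, y) h1
    simpa using this

lemma mul_Am_eq (y : Matrix (Fin n) (Fin n) ℝ) :
    y * Am i j = ∑ k, (y k i • Matrix.single k j 1 - y k j • Matrix.single k i 1) := by
  ext a b
  simp [Am, Matrix.mul_sub, Matrix.sub_apply, Matrix.sum_apply, Matrix.smul_apply,
    Matrix.single, Matrix.mul_apply, Finset.sum_sub_distrib, mul_ite, ite_and,
    mul_sub, Finset.sum_ite_eq, Finset.sum_ite_eq']

lemma Am_mul_eq (y : Matrix (Fin n) (Fin n) ℝ) :
    Am i j * y = ∑ k, (y j k • Matrix.single i k 1 - y i k • Matrix.single j k 1) := by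
  ext a b
  simp [Am, Matrix.sub_mul, Matrix.sub_apply, Matrix.sum_apply, Matrix.smul_apply,
    Matrix.single, Matrix.mul_apply, Finset.sum_sub_distrib, sub_mul, ite_mul, zero_mul,
    one_mul, Finset.sum_ite_eq, Finset.sum_ite_eq']
  by_cases h1 : i = a <;> by_cases h2 : j = a <;>
    simp [h1, h2, Finset.sum_ite_eq, Finset.sum_ite_eq']


end SOlemmas

open SOlemmas

theorem integral_rotational_vector_fields_eq_zero
    (n : ℕ) (hn : 1 ≤ n) (μ : Measure (Matrix (Fin n) (Fin n) ℝ)) (hμ : IsHaarSO n μ)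
    (φ : Matrix (Fin n) (Fin n) ℝ → ℝ) (hφ : ContDiff ℝ (⊤ : ℕ∞) φ)
    (i j : Fin n) (hij : i < j) :
    (∫ y, ∑ k, (y k i * fderiv ℝ φ y (Matrix.single k j 1)
        - y k j * fderiv ℝ φ y (Matrix.single k i 1)) ∂μ) = 0 ∧
    (∫ y, ∑ k, (y i k * fderiv ℝ φ y (Matrix.single j k 1)
        - y j k * fderiv ℝ φ y (Matrix.single i k 1)) ∂μ) = 0 := by
  have hne : i ≠ j := ne_of_lt hij
  constructor
  · have h := core_right hμ φ hφ i j hne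
    have hid : ∀ y : Matrix (Fin n) (Fin n) ℝ,
        (∑ k, (y k i * fderiv ℝ φ y (Matrix.single k j 1)
          - y k j * fderiv ℝ φ y (Matrix.single k i 1)))
        = fderiv ℝ φ y (y * Am i j) := by
      intro y
      rw [mul_Am_eq, map_sum]
      refine Finset.sum_congr rfl fun k _ => ?_
      rw [map_sub, ContinuousLinearMap.map_smul, ContinuousLinearMap.map_smul]
      simp [smul_eq_mul]
    simp only [hid]
    exact h
  · have h := core_left hμ φ hφ i j hne
    have hid : ∀ y : Matrix (Fin n) (Fin n) ℝ,
        (∑ k, (y i k * fderiv ℝ φ y (Matrix.single j k 1)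
          - y j k * fderiv ℝ φ y (Matrix.single i k 1)))
        = - fderiv ℝ φ y (Am i j * y) := by
      intro y
      rw [Am_mul_eq, map_sum, ← Finset.sum_neg_distrib]
      refine Finset.sum_congr rfl fun k _ => ?_
      rw [map_sub, ContinuousLinearMap.map_smul, ContinuousLinearMap.map_smul]
      simp only [smul_eq_mul]
      ring
    simp only [hid]
    rw [integral_neg, h, neg_zero]
end

section
/- Let n ≥ 1 and let T = MvPolynomial ((Fin n × Fin n) ⊕ (Fin n × Fin n)) ℂ be the polynomial ring over ℂ in 2n² variables Y_{ij} and Ξ_{ij} (1 ≤ i,j ≤ n). Let J ⊆ T be the ideal generated by: the polynomials δ_{ij} − Σ_{k=1}^n Y_{ki}Y_{kj} and δ_{ij} − Σ_{k=1}^n Y_{ik}Y_{jk} for 1 ≤ i ≤ j ≤ n; the polynomial 1 − det(Y); and the polynomials Σ_{k=1}^n (Y_{ki}Ξ_{kj} − Y_{kj}Ξ_{ki}) for 1 ≤ i < j ≤ n. Let J' ⊆ T be the ideal generated by the same orthogonality polynomials and 1 − det(Y) together with the polynomials Ξ_{ij} − Ξ_{ji} for 1 ≤ i < j ≤ n. Then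 the quotient rings T/J and T/J' are isomorphic as ℂ-algebras. -/
/-!
Modulo the orthogonality relations the matrix `Y` is orthogonal, so the substitutions
`Ξ ↦ Yᵀ Ξ` and `Ξ ↦ Y Ξ` (fixing `Y`) induce mutually inverse maps between the quotients.
The generators of `J` say that `Yᵀ Ξ` is symmetric and those of `J'` that `Ξ` is; the
substitution `Ξ ↦ Yᵀ Ξ` turns the latter condition into the former, and `Ξ ↦ Y Ξ`, using
`Yᵀ Y = 1`, turns the former into the latter.
-/

open MvPolynomial

/-- The variable `Y i j` of the polynomial ring in the two families of `n²` variables. -/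
noncomputable def Yv (n : ℕ) (i j : Fin n) :
    MvPolynomial ((Fin n × Fin n) ⊕ (Fin n × Fin n)) ℂ :=
  X (Sum.inl (i, j))

/-- The variable `Ξ i j` of the polynomial ring in the two families of `n²` variables. -/
noncomputable def Xv (n : ℕ) (i j : Fin n) :
    MvPolynomial ((Fin n × Fin n) ⊕ (Fin n × Fin n)) ℂ :=
  X (Sum.inr (i, j))

/-- The determinant of the generic matrix `(Y i j)`. -/
noncomputable def detYv (n : ℕ) :
    MvPolynomial ((Fin n × Fin n) ⊕ (Fin n × Fin n)) ℂ :=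
  Matrix.det (Matrix.of fun i j : Fin n => Yv n i j)

/-- The generators `δᵢⱼ - Σₖ Y k i * Y k j`, `δᵢⱼ - Σₖ Y i k * Y j k` (for `i ≤ j`)
and `1 - det Y` cutting out the complex special orthogonal group. -/
def orthoGens (n : ℕ) :
    Set (MvPolynomial ((Fin n × Fin n) ⊕ (Fin n × Fin n)) ℂ) :=
  {p | ∃ i j : Fin n, i ≤ j ∧
      p = (if i = j then 1 else 0) - ∑ k, Yv n k i * Yv n k j} ∪
  {p | ∃ i j : Fin n, i ≤ j ∧
      p = (if i = j then 1 else 0) - ∑ k, Yv n i k * Yv n j k} ∪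
  {1 - detYv n}

open Matrix

namespace Matrix

variable {ι R A F : Type*} [CommRing R] [Ring A] [FunLike F R A] [RingHomClass F R A]

theorem span_sub_transpose_le_ker_iff [LinearOrder ι] (N : Matrix ι ι R) (f : F) :
    Ideal.span {p | ∃ i j, i < j ∧ p = N i j - N j i} ≤ RingHom.ker f ↔ (N.map f).IsSymm := by
  have hker (i j : ι) : N i j - N j i ∈ RingHom.ker f ↔ f (N j i) = f (N i j) := by
    rw [RingHom.mem_ker, map_sub, sub_eq_zero, eq_comm]
  rw [Ideal.span_le, IsSymm.ext_iff]
  constructor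
  · intro h i j
    rcases lt_trichotomy i j with hij | rfl | hji
    · exact (hker i j).1 (h ⟨i, j, hij, rfl⟩)
    · rfl
    · exact ((hker j i).1 (h ⟨j, i, hji, rfl⟩)).symm
  · rintro h _ ⟨i, j, -, rfl⟩
    exact (hker i j).2 (h i j)

theorem transpose_mul_self_map_eq_one [Fintype ι] [LinearOrder ι] (N : Matrix ι ι R) (f : F)
    (h : ∀ i j, i ≤ j → (if i = j then 1 else 0) - ∑ k, N k i * N k j ∈ RingHom.ker f) :
    (N.map f)ᵀ * N.map f = 1 := by
  have hle (i j : ι) (hij : i ≤ j) : ((Nᵀ * N).map f) i j = (1 : Matrix ι ι A) i j := by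
    have := h i j hij
    rw [RingHom.mem_ker, map_sub, sub_eq_zero] at this
    simpa [mul_apply, one_apply, apply_ite f] using this.symm
  have hsymm : ((Nᵀ * N).map f).IsSymm := (isSymm_transpose_mul_self N).map f
  rw [← transpose_map, ← Matrix.map_mul]
  ext i j
  rcases le_total i j with hij | hji
  · exact hle i j hij
  · rw [← hsymm.apply, ← isSymm_one.apply]
    exact hle j i hji

end Matrix

local notation "T[" n "]" => MvPolynomial ((Fin n × Fin n) ⊕ (Fin n × Fin n)) ℂ

variable {n : ℕ} {A : Type*} [Ring A] [Algebra ℂ A]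

noncomputable def Ymat (n : ℕ) : Matrix (Fin n) (Fin n) T[n] := of (Yv n)

noncomputable def Xmat (n : ℕ) : Matrix (Fin n) (Fin n) T[n] := of (Xv n)

theorem algHom_ext_of_map_Ymat_Xmat {f g : T[n] →ₐ[ℂ] A} (hY : (Ymat n).map f = (Ymat n).map g)
    (hX : (Xmat n).map f = (Xmat n).map g) : f = g :=
  algHom_ext fun
    | .inl (i, j) => congr_fun₂ hY i j
    | .inr (i, j) => congr_fun₂ hX i j

theorem transpose_mul_self_map_Ymat_eq_one {f : T[n] →ₐ[ℂ] A}
    (hf : orthoGens n ⊆ RingHom.ker f) : ((Ymat n).map f)ᵀ * (Ymat n).map f = 1 :=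
  transpose_mul_self_map_eq_one _ f fun i j hij => hf (.inl (.inl ⟨i, j, hij, rfl⟩))

noncomputable def substXi (M : Matrix (Fin n) (Fin n) T[n]) : T[n] →ₐ[ℂ] T[n] :=
  aeval (Sum.elim (fun p => Yv n p.1 p.2) (fun p => M p.1 p.2))

section substXi

variable (M : Matrix (Fin n) (Fin n) T[n])

@[simp] theorem substXi_Yv (i j : Fin n) : substXi M (Yv n i j) = Yv n i j := by
  simp [substXi, Yv]

@[simp] theorem substXi_Xv (i j : Fin n) : substXi M (Xv n i j) = M i j := by
  simp [substXi, Xv]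

theorem substXi_detYv : substXi M (detYv n) = detYv n := by
  rw [detYv, AlgHom.map_det]
  congr 1
  ext i j
  simp

theorem substXi_of_mem_orthoGens {p : T[n]} (hp : p ∈ orthoGens n) : substXi M p = p := by
  rcases hp with (⟨i, j, -, rfl⟩ | ⟨i, j, -, rfl⟩) | rfl
  · simp [apply_ite (substXi M)]
  · simp [apply_ite (substXi M)]
  · simp [substXi_detYv]

theorem orthoGens_subset_ker_comp_substXi {f : T[n] →ₐ[ℂ] A} (hf : orthoGens n ⊆ RingHom.ker f) :
    orthoGens n ⊆ RingHom.ker (f.comp (substXi M)) := fun p hp => by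
  simpa [RingHom.mem_ker, substXi_of_mem_orthoGens M hp] using hf hp

@[simp] theorem map_Ymat_comp_substXi (f : T[n] →ₐ[ℂ] A) :
    (Ymat n).map (f.comp (substXi M)) = (Ymat n).map f := by
  ext i j
  simp [Ymat]

@[simp] theorem map_Xmat_comp_substXi (f : T[n] →ₐ[ℂ] A) :
    (Xmat n).map (f.comp (substXi M)) = M.map f := by
  ext i j
  simp [Xmat]

end substXi

noncomputable def idealJ (n : ℕ) : Ideal T[n] :=
  Ideal.span (orthoGens n ∪
    {p | ∃ i j : Fin n, i < j ∧ p = ∑ k, (Yv n k i * Xv n k j - Yv n k j * Xv n k i)})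

noncomputable def idealJ' (n : ℕ) : Ideal T[n] :=
  Ideal.span (orthoGens n ∪ {p | ∃ i j : Fin n, i < j ∧ p = Xv n i j - Xv n j i})

theorem idealJ_le_ker_iff (f : T[n] →ₐ[ℂ] A) :
    idealJ n ≤ RingHom.ker f ↔
      orthoGens n ⊆ RingHom.ker f ∧ (((Ymat n)ᵀ * Xmat n).map f).IsSymm := by
  have hgen (i j : Fin n) : ∑ k, (Yv n k i * Xv n k j - Yv n k j * Xv n k i) =
      ((Ymat n)ᵀ * Xmat n) i j - ((Ymat n)ᵀ * Xmat n) j i := by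
    simp [mul_apply, Ymat, Xmat, Finset.sum_sub_distrib]
  simp_rw [idealJ, hgen]
  rw [Ideal.span_union, sup_le_iff, Ideal.span_le, span_sub_transpose_le_ker_iff]

theorem idealJ'_le_ker_iff (f : T[n] →ₐ[ℂ] A) :
    idealJ' n ≤ RingHom.ker f ↔ orthoGens n ⊆ RingHom.ker f ∧ ((Xmat n).map f).IsSymm := by
  rw [idealJ', Ideal.span_union, sup_le_iff, Ideal.span_le, ← span_sub_transpose_le_ker_iff]
  rfl

section Quotients

open Ideal.Quotient

variable (n)

theorem idealJ_le_ker_substXi :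
    idealJ n ≤ RingHom.ker ((mkₐ ℂ (idealJ' n)).comp (substXi (Ymat n * Xmat n))) := by
  obtain ⟨hO, hS⟩ := (idealJ'_le_ker_iff _).1 (mkₐ_ker ℂ (idealJ' n)).ge
  refine (idealJ_le_ker_iff _).2 ⟨orthoGens_subset_ker_comp_substXi _ hO, ?_⟩
  rwa [Matrix.map_mul, transpose_map, map_Ymat_comp_substXi, map_Xmat_comp_substXi,
    Matrix.map_mul, ← mul_assoc, transpose_mul_self_map_Ymat_eq_one hO, one_mul]

theorem idealJ'_le_ker_substXi :
    idealJ' n ≤ RingHom.ker ((mkₐ ℂ (idealJ n)).comp (substXi ((Ymat n)ᵀ * Xmat n))) := by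
  obtain ⟨hO, hS⟩ := (idealJ_le_ker_iff _).1 (mkₐ_ker ℂ (idealJ n)).ge
  refine (idealJ'_le_ker_iff _).2 ⟨orthoGens_subset_ker_comp_substXi _ hO, ?_⟩
  rwa [map_Xmat_comp_substXi]

noncomputable def quotientJToJ' : T[n] ⧸ idealJ n →ₐ[ℂ] T[n] ⧸ idealJ' n :=
  liftₐ _ _ fun _ ha => RingHom.mem_ker.1 (idealJ_le_ker_substXi n ha)

noncomputable def quotientJ'ToJ : T[n] ⧸ idealJ' n →ₐ[ℂ] T[n] ⧸ idealJ n :=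
  liftₐ _ _ fun _ ha => RingHom.mem_ker.1 (idealJ'_le_ker_substXi n ha)

theorem quotientJToJ'_comp_quotientJ'ToJ :
    (quotientJToJ' n).comp (quotientJ'ToJ n) = AlgHom.id ℂ _ := by
  refine algHom_ext ℂ ?_
  rw [AlgHom.comp_assoc, quotientJ'ToJ, liftₐ_comp, ← AlgHom.comp_assoc, quotientJToJ',
    liftₐ_comp, AlgHom.id_comp]
  obtain ⟨hO, -⟩ := (idealJ'_le_ker_iff _).1 (mkₐ_ker ℂ (idealJ' n)).ge
  refine algHom_ext_of_map_Ymat_Xmat (by simp only [map_Ymat_comp_substXi]) ?_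
  rw [map_Xmat_comp_substXi, Matrix.map_mul, transpose_map, map_Ymat_comp_substXi,
    map_Xmat_comp_substXi, Matrix.map_mul, ← mul_assoc, transpose_mul_self_map_Ymat_eq_one hO,
    one_mul]

theorem quotientJ'ToJ_comp_quotientJToJ' :
    (quotientJ'ToJ n).comp (quotientJToJ' n) = AlgHom.id ℂ _ := by
  refine algHom_ext ℂ ?_
  rw [AlgHom.comp_assoc, quotientJToJ', liftₐ_comp, ← AlgHom.comp_assoc, quotientJ'ToJ,
    liftₐ_comp, AlgHom.id_comp]
  obtain ⟨hO, -⟩ := (idealJ_le_ker_iff _).1 (mkₐ_ker ℂ (idealJ n)).ge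
  refine algHom_ext_of_map_Ymat_Xmat (by simp only [map_Ymat_comp_substXi]) ?_
  rw [map_Xmat_comp_substXi, Matrix.map_mul, map_Ymat_comp_substXi, map_Xmat_comp_substXi,
    Matrix.map_mul, transpose_map, ← mul_assoc,
    mul_eq_one_comm.1 (transpose_mul_self_map_Ymat_eq_one hO), one_mul]

end Quotients

theorem quotient_by_J_iso_quotient_by_Jprime_general (n : ℕ) :
    let T := MvPolynomial ((Fin n × Fin n) ⊕ (Fin n × Fin n)) ℂ
    let J : Ideal T := Ideal.span
      (orthoGens n ∪
        {p | ∃ i j : Fin n, i < j ∧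
            p = ∑ k, (Yv n k i * Xv n k j - Yv n k j * Xv n k i)})
    let J' : Ideal T := Ideal.span
      (orthoGens n ∪ {p | ∃ i j : Fin n, i < j ∧ p = Xv n i j - Xv n j i})
    Nonempty ((T ⧸ J) ≃ₐ[ℂ] (T ⧸ J')) :=
  ⟨.ofAlgHom (quotientJToJ' n) (quotientJ'ToJ n) (quotientJToJ'_comp_quotientJ'ToJ n)
    (quotientJ'ToJ_comp_quotientJToJ' n)⟩

theorem quotient_by_J_iso_quotient_by_Jprime (n : ℕ) (hn : 1 ≤ n) :
    let T := MvPolynomial ((Fin n × Fin n) ⊕ (Fin n × Fin n)) ℂ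
    let J : Ideal T := Ideal.span
      (orthoGens n ∪
        {p | ∃ i j : Fin n, i < j ∧
            p = ∑ k, (Yv n k i * Xv n k j - Yv n k j * Xv n k i)})
    let J' : Ideal T := Ideal.span
      (orthoGens n ∪ {p | ∃ i j : Fin n, i < j ∧ p = Xv n i j - Xv n j i})
    Nonempty ((T ⧸ J) ≃ₐ[ℂ] (T ⧸ J')) :=
  quotient_by_J_iso_quotient_by_Jprime_general n
end

section
/- Let n ≥ 1, let μ be the Haar probability measure on SO(n), and let f(x) = ∫_{SO(n)} exp(tr(x·y)) dμ(y) be the Fisher integral on the space of n×n real matrices. Then for every pair of indices 1 ≤ i < j ≤ n and every n×n real matrix x: Σ_{k=1}^n ( x_{ki}·(∂f/∂x_{kj})(x) − x_{kj}·(∂f/∂x_{ki})(x) ) = 0, where ∂f/∂x_{ab} denotes the partial derivative of f in the (a,b) matrix-entry coordinate. -/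
open MeasureTheory Matrix

attribute [local instance] Matrix.normedAddCommGroup Matrix.normedSpace

/-- The Fisher integral `f(x) = ∫_{SO(n)} exp(tr(x·y)) dμ(y)`, where
`tr(x·y) = Σᵢⱼ xᵢⱼ yᵢⱼ`. -/
noncomputable def fisher (n : ℕ) (μ : Measure (Matrix (Fin n) (Fin n) ℝ))
    (x : Matrix (Fin n) (Fin n) ℝ) : ℝ :=
  ∫ y, Real.exp (∑ i, ∑ j, x i j * y i j) ∂μ

/-- The partial derivative operator `∂/∂x_{a b}` in the `(a,b)` matrix-entry coordinate. -/
noncomputable def pd {n : ℕ} (a b : Fin n) (g : Matrix (Fin n) (Fin n) ℝ → ℝ) :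
    Matrix (Fin n) (Fin n) ℝ → ℝ :=
  fun x => fderiv ℝ g x (Matrix.single a b 1)

/-! Right multiplication by `a ∈ SO(n)` moves the pairing onto the integration variable,
`tr((x a)ᵀ y) = tr(xᵀ (y aᵀ))`, and the Haar measure of the compact group `SO(n)` is right
invariant as well, so `f (x a) = f x`. Differentiating `t ↦ f (x · exp (t A))` at `0` for the
skew-symmetric `A = E_ij - E_ji` gives `Df(x)(x A) = 0`, and `x A` is the vector field
`Σ_k (x_ki ∂/∂x_kj - x_kj ∂/∂x_ki)`. -/

instance inst_s7 (n : ℕ) : BorelSpace (Matrix (Fin n) (Fin n) ℝ) := ⟨rfl⟩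

instance inst_s7_2 (n : ℕ) : SecondCountableTopology (Matrix (Fin n) (Fin n) ℝ) :=
  inferInstanceAs (SecondCountableTopology (Fin n → Fin n → ℝ))

lemma integrable_of_continuous_of_ae_mem_compact {X E : Type*} [TopologicalSpace X] [T2Space X]
    [MeasurableSpace X] [OpensMeasurableSpace X] [NormedAddCommGroup E] {μ : Measure X}
    [IsFiniteMeasure μ] {K : Set X} (hK : IsCompact K) (hμK : ∀ᵐ y ∂μ, y ∈ K) {g : X → E}
    (hg : Continuous g) : Integrable g μ := by
  rw [← Measure.restrict_eq_self_of_ae_mem hμK]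
  exact hg.continuousOn.integrableOn_compact hK

section SO

variable {n : ℕ}

lemma transpose_mem_SO {a : Matrix (Fin n) (Fin n) ℝ} (ha : a ∈ SO n) : aᵀ ∈ SO n :=
  ⟨by rw [transpose_transpose, mul_eq_one_comm, ha.1], by rw [det_transpose, ha.2]⟩

lemma isClosed_SO : IsClosed (SO n) :=
  (isClosed_eq (by fun_prop) continuous_const).inter
    (isClosed_eq continuous_id.matrix_det continuous_const)

lemma SO_subset_closedBall : SO n ⊆ Metric.closedBall 0 1 := fun y hy => by
  have hU : y ∈ unitaryGroup (Fin n) ℝ := by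
    rw [mem_unitaryGroup_iff', star_eq_conjTranspose, conjTranspose_eq_transpose_of_trivial]
    exact hy.1
  simpa using entrywise_sup_norm_bound_of_unitary hU

lemma isCompact_SO : IsCompact (SO n) :=
  Metric.isCompact_of_isClosed_isBounded isClosed_SO
    (Metric.isBounded_closedBall.subset SO_subset_closedBall)

lemma exp_mem_SO {A : Matrix (Fin n) (Fin n) ℝ} (hA : Aᵀ = -A) : NormedSpace.exp A ∈ SO n := by
  have horth : (NormedSpace.exp A)ᵀ * NormedSpace.exp A = 1 := by
    rw [← exp_transpose, hA, ← exp_add_of_commute _ _ (Commute.neg_left (Commute.refl A)),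
      neg_add_cancel, NormedSpace.exp_zero]
  refine ⟨horth, ?_⟩
  have hsq : (NormedSpace.exp A).det * (NormedSpace.exp A).det = 1 := by
    simpa using congrArg det horth
  -- `exp A` is a square, so its determinant is `1` rather than `-1`.
  have hnonneg : 0 ≤ (NormedSpace.exp A).det := by
    have hhalf : NormedSpace.exp A =
        NormedSpace.exp ((2⁻¹ : ℝ) • A) * NormedSpace.exp ((2⁻¹ : ℝ) • A) := by
      rw [← exp_add_of_commute _ _ (Commute.refl _), ← add_smul]
      norm_num
    rw [hhalf, det_mul]
    exact mul_self_nonneg _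
  nlinarith

end SO

namespace IsHaarSO

variable {n : ℕ} {μ : Measure (Matrix (Fin n) (Fin n) ℝ)}

lemma integral_comp_mul_left (hμ : IsHaarSO n μ) {a : Matrix (Fin n) (Fin n) ℝ} (ha : a ∈ SO n)
    {g : Matrix (Fin n) (Fin n) ℝ → ℝ} (hg : AEStronglyMeasurable g μ) :
    ∫ y, g (a * y) ∂μ = ∫ y, g y ∂μ := by
  have hmul : Measurable fun y : Matrix (Fin n) (Fin n) ℝ => a * y := by fun_prop
  conv_rhs => rw [← hμ.left_invariant a ha]
  rw [integral_map hmul.aemeasurable (by rwa [hμ.left_invariant a ha])]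

/-- Both sides equal `∫∫ g (yᵀ * z) dμ(y) dμ(z)`: integrate first in `z`, resp. first in `y`,
using left invariance for the inner integral. -/
lemma integral_comp_transpose (hμ : IsHaarSO n μ) {g : Matrix (Fin n) (Fin n) ℝ → ℝ}
    (hg : Continuous g) : ∫ y, g yᵀ ∂μ = ∫ y, g y ∂μ := by
  have := hμ.isProbabilityMeasure
  have hprod : ∀ᵐ p ∂μ.prod μ, p ∈ SO n ×ˢ SO n := by
    rw [Measure.ae_prod_mem_iff_ae_ae_mem
      (isClosed_SO.measurableSet.prod isClosed_SO.measurableSet)]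
    filter_upwards [hμ.ae_mem] with y hy
    filter_upwards [hμ.ae_mem] with z hz using ⟨hy, hz⟩
  have hint : Integrable (fun p : Matrix (Fin n) (Fin n) ℝ × Matrix (Fin n) (Fin n) ℝ =>
      g (p.1ᵀ * p.2)) (μ.prod μ) :=
    integrable_of_continuous_of_ae_mem_compact (isCompact_SO.prod isCompact_SO) hprod
      (by fun_prop)
  have inner_y : ∀ᵐ y ∂μ, ∫ z, g (yᵀ * z) ∂μ = ∫ z, g z ∂μ := by
    filter_upwards [hμ.ae_mem] with y hy
    exact hμ.integral_comp_mul_left (transpose_mem_SO hy) hg.aestronglyMeasurable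
  have inner_z : ∀ᵐ z ∂μ, ∫ y, g (yᵀ * z) ∂μ = ∫ y, g yᵀ ∂μ := by
    filter_upwards [hμ.ae_mem] with z hz
    simpa [transpose_mul] using hμ.integral_comp_mul_left (g := fun y => g yᵀ)
      (transpose_mem_SO hz) (by fun_prop : Continuous fun y => g yᵀ).aestronglyMeasurable
  calc ∫ y, g yᵀ ∂μ = ∫ z, ∫ y, g (yᵀ * z) ∂μ ∂μ := by
        rw [integral_congr_ae inner_z, integral_const, probReal_univ, one_smul]
    _ = ∫ y, ∫ z, g (yᵀ * z) ∂μ ∂μ := (integral_integral_swap hint).symm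
    _ = ∫ y, g y ∂μ := by
        rw [integral_congr_ae inner_y, integral_const, probReal_univ, one_smul]

lemma integral_comp_mul_right (hμ : IsHaarSO n μ) {b : Matrix (Fin n) (Fin n) ℝ} (hb : b ∈ SO n)
    {g : Matrix (Fin n) (Fin n) ℝ → ℝ} (hg : Continuous g) :
    ∫ y, g (y * b) ∂μ = ∫ y, g y ∂μ :=
  calc ∫ y, g (y * b) ∂μ = ∫ y, g (yᵀ * b) ∂μ :=
        (hμ.integral_comp_transpose (g := fun y => g (y * b)) (by fun_prop)).symm
    _ = ∫ y, g (bᵀ * y)ᵀ ∂μ := by simp only [transpose_mul, transpose_transpose]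
    _ = ∫ y, g yᵀ ∂μ := hμ.integral_comp_mul_left (transpose_mem_SO hb)
        (by fun_prop : Continuous fun y => g yᵀ).aestronglyMeasurable
    _ = ∫ y, g y ∂μ := hμ.integral_comp_transpose hg

end IsHaarSO

lemma sum_sum_mul_eq_trace {n : ℕ} (x y : Matrix (Fin n) (Fin n) ℝ) :
    ∑ i, ∑ j, x i j * y i j = (xᵀ * y).trace := by
  simp only [trace, diag_apply, mul_apply, transpose_apply]
  exact Finset.sum_comm

lemma fisher_mul_right {n : ℕ} {μ : Measure (Matrix (Fin n) (Fin n) ℝ)} (hμ : IsHaarSO n μ)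
    (x : Matrix (Fin n) (Fin n) ℝ) {a : Matrix (Fin n) (Fin n) ℝ} (ha : a ∈ SO n) :
    fisher n μ (x * a) = fisher n μ x := by
  have hpair : ∀ y, ((x * a)ᵀ * y).trace = (xᵀ * (y * aᵀ)).trace := fun y => by
    rw [transpose_mul, mul_assoc, trace_mul_comm, mul_assoc]
  simp only [fisher, sum_sum_mul_eq_trace, hpair]
  exact hμ.integral_comp_mul_right (g := fun y => Real.exp (xᵀ * y).trace) (transpose_mem_SO ha)
    (continuous_const.matrix_mul continuous_id).matrix_trace.rexp

lemma fderiv_apply_mul_eq_zero_of_mul_right_invariant {n : ℕ}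
    {F : Matrix (Fin n) (Fin n) ℝ → ℝ} (hF : ∀ x, ∀ a ∈ SO n, F (x * a) = F x)
    (x : Matrix (Fin n) (Fin n) ℝ) {A : Matrix (Fin n) (Fin n) ℝ} (hA : Aᵀ = -A) :
    fderiv ℝ F x (x * A) = 0 := by
  by_cases hFx : DifferentiableAt ℝ F x
  swap
  · simp [fderiv_zero_of_not_differentiableAt hFx]
  set c : ℝ → Matrix (Fin n) (Fin n) ℝ := fun t => x * NormedSpace.exp (t • A)
  have hc0 : c 0 = x := by simp [c]
  -- `HasDerivAt` only sees the topology, so any submultiplicative norm may be used here.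
  have hc : HasDerivAt c (x * A) 0 := by
    have h := open scoped Norms.Operator in
      (hasDerivAt_exp_smul_const (𝕂 := ℝ) A 0).const_mul x
    simp only [zero_smul, NormedSpace.exp_zero, one_mul] at h
    exact h
  have hFc : F ∘ c = fun _ => F x :=
    funext fun t => hF x _ (exp_mem_SO (by rw [transpose_smul, hA, smul_neg]))
  have hcomp : HasDerivAt (F ∘ c) (fderiv ℝ F x (x * A)) 0 := by
    refine HasFDerivAt.comp_hasDerivAt _ ?_ hc
    rw [hc0]
    exact hFx.hasFDerivAt
  rw [hFc] at hcomp
  exact hcomp.unique (hasDerivAt_const 0 _)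

lemma sum_smul_single_sub_smul_single {n : ℕ} (x : Matrix (Fin n) (Fin n) ℝ) (i j : Fin n) :
    ∑ k, (x k i • single k j 1 - x k j • single k i 1) = x * (single i j 1 - single j i 1) := by
  ext a b
  simp [mul_sub, Matrix.sum_apply, mul_apply, single_apply, ite_and]

theorem fisher_annihilated_by_rotational_operators_general (n : ℕ)
    (μ : Measure (Matrix (Fin n) (Fin n) ℝ)) (hμ : IsHaarSO n μ)
    (i j : Fin n) (x : Matrix (Fin n) (Fin n) ℝ) :
    ∑ k, (x k i * pd k j (fisher n μ) x - x k j * pd k i (fisher n μ) x) = 0 := by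
  have hskew : (single i j (1 : ℝ) - single j i 1)ᵀ = -(single i j 1 - single j i 1) := by
    rw [transpose_sub, transpose_single, transpose_single, neg_sub]
  calc ∑ k, (x k i * pd k j (fisher n μ) x - x k j * pd k i (fisher n μ) x)
      = fderiv ℝ (fisher n μ) x (∑ k, (x k i • single k j 1 - x k j • single k i 1)) := by
        simp only [pd, map_sum, map_sub, map_smul, smul_eq_mul]
    _ = 0 := by
        rw [sum_smul_single_sub_smul_single]
        exact fderiv_apply_mul_eq_zero_of_mul_right_invariant
          (fun y a ha => fisher_mul_right hμ y ha) x hskew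

theorem fisher_annihilated_by_rotational_operators (n : ℕ) (hn : 1 ≤ n)
    (μ : Measure (Matrix (Fin n) (Fin n) ℝ)) (hμ : IsHaarSO n μ)
    (i j : Fin n) (hij : i < j) (x : Matrix (Fin n) (Fin n) ℝ) :
    ∑ k, (x k i * pd k j (fisher n μ) x - x k j * pd k i (fisher n μ) x) = 0 :=
  fisher_annihilated_by_rotational_operators_general n μ hμ i j x
end
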